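/- Let q be a prime power and m ≥ 1. If 1 ≤ m ≤ q−1, then the Wenger graph W_m(q) is connected. If m ≥ q, then W_m(q) is disconnected and has exactly q^{m−q+1} connected components, each of which is isomorphic to W_{q−1}(q). -/

import Mathlib

/-- The Wenger adjacency condition: a point `p` and a line `l` in `F^{m+1}` (0-indexed)
are adjacent iff `l_{k+1} + p_{k+1} = p_1 l_k` for all `1 ≤ k ≤ m`. -/
def wengerAdj {F : Type} [Field F] (m : ℕ) (p l : Fin (m + 1) → F) : Prop :=
  ∀ k : Fin m, l k.succ + p k.succ = p 0 * l k.castSucc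

/-- The Wenger graph `W_m(q)`, a bipartite graph on two copies of `F_q^{m+1}`. -/
def Wenger (F : Type) [Field F] (m : ℕ) :
    SimpleGraph ((Fin (m + 1) → F) ⊕ (Fin (m + 1) → F)) :=
  SimpleGraph.fromRel (fun x y => ∃ p l, x = Sum.inl p ∧ y = Sum.inr l ∧ wengerAdj m p l)

/-!
The lines through a point `p` are exactly the translates `l + t • (aᵏ)ₖ` of any one of them,
where `a = p 0`. So a line–point–line step translates a line by an arbitrary multiple of a
moment vector `(aᵏ)ₖ`; for `m + 1 ≤ q` these span `F^{m+1}` (Vandermonde), which connects all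
lines and hence all vertices.

For `Q = q - 1 ≤ m` we have `a ^ (j + 1 + Q) = a ^ (j + 1)`, so `l (j + 1) - l (j + 1 + Q)`
takes the same value on all lines through a point; assigning that value to the point gives an
invariant of vertices in `F^{m-Q}` that is constant along edges. A point and a line are adjacent in `W_m` iff their
truncations to the first `Q + 1` coordinates are adjacent in `W_Q` and their invariants agree,
and (truncation, invariant) is a bijection onto `V(W_Q) × F^{m-Q}`. Hence `W_m` is a disjoint
union of `q^{m-Q}` copies of the connected graph `W_Q`.
-/

open SimpleGraph

noncomputable section

section Fibration

variable {V W C : Type*} {G : SimpleGraph V} {H : SimpleGraph W} (e : V ≃ W × C)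
  (he : ∀ x y, G.Adj x y ↔ H.Adj (e x).1 (e y).1 ∧ (e x).2 = (e y).2)
include he

theorem reachable_iff_snd_eq_of_adj_iff (hH : H.Preconnected) {x y : V} :
    G.Reachable x y ↔ (e x).2 = (e y).2 := by
  constructor
  · rintro ⟨w⟩
    induction w with
    | nil => rfl
    | cons hadj _ ih => exact ((he _ _).mp hadj).2.trans ih
  · intro hxy
    let lift : H →g G :=
      { toFun := fun w => e.symm (w, (e x).2)
        map_rel' := fun h => by simpa [he] using h }
    have hx : lift (e x).1 = x := by simp [lift]
    have hy : lift (e y).1 = y := by simp [lift, hxy]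
    simpa only [hx, hy] using (hH (e x).1 (e y).1).map lift

def componentEquivOfAdjIff (hH : H.Connected) : G.ConnectedComponent ≃ C where
  toFun := ConnectedComponent.lift (fun x => (e x).2) fun _ _ w _ =>
    (reachable_iff_snd_eq_of_adj_iff e he hH.preconnected).mp ⟨w⟩
  invFun c := G.connectedComponentMk (e.symm (hH.nonempty.some, c))
  left_inv C := by
    induction C using ConnectedComponent.ind
    exact ConnectedComponent.sound
      ((reachable_iff_snd_eq_of_adj_iff e he hH.preconnected).mpr (by simp))
  right_inv c := by simp

theorem mem_supp_iff_of_adj_iff (hH : H.Connected) {C : G.ConnectedComponent} {x : V} :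
    x ∈ C.supp ↔ (e x).2 = componentEquivOfAdjIff e he hH C := by
  induction C using ConnectedComponent.ind
  rw [ConnectedComponent.mem_supp_iff, ConnectedComponent.eq,
    reachable_iff_snd_eq_of_adj_iff e he hH.preconnected]
  rfl

def induceSuppIsoOfAdjIff (hH : H.Connected) (C : G.ConnectedComponent) :
    G.induce C.supp ≃g H where
  toFun x := (e x).1
  invFun w := ⟨e.symm (w, componentEquivOfAdjIff e he hH C),
    (mem_supp_iff_of_adj_iff e he hH).mpr (by simp)⟩
  left_inv := fun ⟨x, hx⟩ => Subtype.ext <| e.symm_apply_eq.mpr <|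
    Prod.ext rfl ((mem_supp_iff_of_adj_iff e he hH).mp hx).symm
  right_inv w := by simp
  map_rel_iff' {x y} := by
    have hx := (mem_supp_iff_of_adj_iff e he hH).mp x.2
    have hy := (mem_supp_iff_of_adj_iff e he hH).mp y.2
    simp [he, hx, hy]

end Fibration

section WengerGraph

variable {F : Type} [Field F] {m Q : ℕ}

@[simp] theorem wenger_adj_inl_inr {p l : Fin (m + 1) → F} :
    (Wenger F m).Adj (Sum.inl p) (Sum.inr l) ↔ wengerAdj m p l := by
  simp [Wenger]

@[simp] theorem wenger_adj_inr_inl {p l : Fin (m + 1) → F} :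
    (Wenger F m).Adj (Sum.inr l) (Sum.inl p) ↔ wengerAdj m p l := by
  simp [Wenger]

@[simp] theorem not_wenger_adj_inl_inl {p p' : Fin (m + 1) → F} :
    ¬ (Wenger F m).Adj (Sum.inl p) (Sum.inl p') := by
  simp [Wenger]

@[simp] theorem not_wenger_adj_inr_inr {l l' : Fin (m + 1) → F} :
    ¬ (Wenger F m).Adj (Sum.inr l) (Sum.inr l') := by
  simp [Wenger]

def moment (m : ℕ) (a : F) : Fin (m + 1) → F := fun k => a ^ (k : ℕ)

theorem wengerAdj.add_smul_moment {p l : Fin (m + 1) → F} (h : wengerAdj m p l) (t : F) :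
    wengerAdj m p (l + t • moment m (p 0)) := by
  intro k
  simp only [Pi.add_apply, Pi.smul_apply, moment, smul_eq_mul, Fin.val_succ,
    Fin.val_castSucc, pow_succ]
  linear_combination h k

theorem wengerAdj.eq_add_smul_moment {p l l' : Fin (m + 1) → F} (h : wengerAdj m p l)
    (h' : wengerAdj m p l') : l' = l + (l' 0 - l 0) • moment m (p 0) := by
  funext i
  induction i using Fin.induction with
  | zero => simp [moment]
  | succ i ih =>
    simp only [Pi.add_apply, Pi.smul_apply, moment, smul_eq_mul, Fin.val_succ, Fin.val_castSucc,
      pow_succ] at ih ⊢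
    linear_combination h' i - h i + p 0 * ih

theorem wengerAdj.left_unique {p p' l : Fin (m + 1) → F} (h : wengerAdj m p l)
    (h' : wengerAdj m p' l) (h0 : p 0 = p' 0) : p = p' := by
  funext i
  induction i using Fin.cases with
  | zero => exact h0
  | succ i => linear_combination h i - h' i + l i.castSucc * h0

theorem exists_wengerAdj_left (a : F) (l : Fin (m + 1) → F) :
    ∃ p, p 0 = a ∧ wengerAdj m p l :=
  ⟨Fin.cons a fun k => a * l k.castSucc - l k.succ, rfl, fun k => by simp⟩

def adjLine (p : Fin (m + 1) → F) : Fin (m + 1) → F :=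
  Fin.induction 0 fun k x => p 0 * x - p k.succ

theorem wengerAdj_adjLine (p : Fin (m + 1) → F) : wengerAdj m p (adjLine p) := by
  intro k
  simp [adjLine, Fin.induction_succ]

theorem wenger_reachable_add_smul_moment (l : Fin (m + 1) → F) (a t : F) :
    (Wenger F m).Reachable (Sum.inr l) (Sum.inr (l + t • moment m a)) := by
  obtain ⟨p, rfl, hp⟩ := exists_wengerAdj_left a l
  exact (wenger_adj_inr_inl.mpr hp).reachable.trans
    (wenger_adj_inl_inr.mpr (hp.add_smul_moment t)).reachable

theorem span_range_moment_eq_top [Fintype F] (h : m + 1 ≤ Fintype.card F) :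
    Submodule.span F (Set.range (moment m : F → Fin (m + 1) → F)) = ⊤ := by
  obtain ⟨x⟩ : Nonempty (Fin (m + 1) ↪ F) :=
    Function.Embedding.nonempty_of_card_le (by simpa using h)
  have hunit : IsUnit (Matrix.vandermonde x) := by
    rw [Matrix.isUnit_iff_isUnit_det, isUnit_iff_ne_zero]
    exact Matrix.det_vandermonde_ne_zero_iff.mpr x.injective
  refine Submodule.eq_top_iff'.mpr fun c => ?_
  obtain ⟨f, rfl⟩ := Matrix.vecMul_surjective_iff_isUnit.mpr hunit c
  change Matrix.vecMul f _ ∈ _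
  rw [Matrix.vecMul_eq_sum]
  exact Submodule.sum_mem _ fun i _ => Submodule.smul_mem _ _ (Submodule.subset_span ⟨x i, rfl⟩)

theorem wenger_connected [Fintype F] (h : m + 1 ≤ Fintype.card F) : (Wenger F m).Connected := by
  have hline (l : Fin (m + 1) → F) : (Wenger F m).Reachable (Sum.inr 0) (Sum.inr l) := by
    obtain ⟨f, rfl⟩ := (Submodule.mem_span_range_iff_exists_fun F).mp
      (by simp [span_range_moment_eq_top h] : l ∈ Submodule.span F (Set.range (moment m)))
    simpa using Finset.sum_induction (s := Finset.univ) _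
      (fun c => ∀ l, (Wenger F m).Reachable (Sum.inr l) (Sum.inr (l + c)))
      (fun c d hc hd l => by simpa [add_assoc] using (hc l).trans (hd (l + c)))
      (fun l => by simp) (fun a _ l => wenger_reachable_add_smul_moment l a (f a)) 0
  have hvertex : ∀ x, (Wenger F m).Reachable (Sum.inr 0) x := by
    rintro (p | l)
    · exact (hline _).trans (wenger_adj_inr_inl.mpr (wengerAdj_adjLine p)).reachable
    · exact hline l
  exact (connected_iff _).mpr ⟨fun x y => (hvertex x).symm.trans (hvertex y), ⟨Sum.inr 0⟩⟩

def truncate (hQm : Q ≤ m) (v : Fin (m + 1) → F) : Fin (Q + 1) → F :=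
  v ∘ Fin.castLE (Nat.succ_le_succ hQm)

theorem truncate_add_smul_moment (hQm : Q ≤ m) (v : Fin (m + 1) → F) (t a : F) :
    truncate hQm (v + t • moment m a) = truncate hQm v + t • moment Q a := by
  funext i
  simp [truncate, moment]

theorem wengerAdj.truncate {p l : Fin (m + 1) → F} (h : wengerAdj m p l) (hQm : Q ≤ m) :
    wengerAdj Q (truncate hQm p) (truncate hQm l) := by
  intro k
  simpa [_root_.truncate, Fin.castLE_succ] using h (Fin.castLE hQm k)

def lineInvariant (Q : ℕ) (l : Fin (m + 1) → F) : Fin (m - Q) → F :=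
  fun j => l ⟨j + 1, by omega⟩ - l ⟨j + 1 + Q, by omega⟩

theorem lineInvariant_add_smul_moment (hpow : ∀ a : F, a ^ (Q + 1) = a) (l : Fin (m + 1) → F)
    (t a : F) : lineInvariant Q (l + t • moment m a) = lineInvariant Q l := by
  funext j
  have : a ^ (j + 1 + Q : ℕ) = a ^ (j + 1 : ℕ) := by
    rw [show (j + 1 + Q : ℕ) = j + (Q + 1) by ring, pow_add, hpow, pow_succ]
  simp [lineInvariant, moment, this]

theorem wengerAdj.lineInvariant_eq (hpow : ∀ a : F, a ^ (Q + 1) = a)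
    {p l l' : Fin (m + 1) → F} (h : wengerAdj m p l) (h' : wengerAdj m p l') :
    lineInvariant Q l = lineInvariant Q l' := by
  rw [h.eq_add_smul_moment h', lineInvariant_add_smul_moment hpow]

theorem eq_of_truncate_eq_of_lineInvariant_eq (hQ : 0 < Q) (hQm : Q ≤ m)
    {l l' : Fin (m + 1) → F} (ht : truncate hQm l = truncate hQm l')
    (hc : lineInvariant Q l = lineInvariant Q l') : l = l' := by
  suffices ∀ k (hk : k < m + 1), l ⟨k, hk⟩ = l' ⟨k, hk⟩ from funext fun i => this i i.2
  intro k
  induction k using Nat.strong_induction_on with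
  | _ k ih =>
    intro hk
    by_cases hkQ : k ≤ Q
    · exact congrFun ht ⟨k, by omega⟩
    · obtain ⟨j, rfl⟩ : ∃ j, k = j + 1 + Q := ⟨k - Q - 1, by omega⟩
      have hj := congrFun hc ⟨j, by omega⟩
      simp only [lineInvariant, ih (j + 1) (by omega)] at hj
      linear_combination -hj

def pointInvariant (Q : ℕ) (p : Fin (m + 1) → F) : Fin (m - Q) → F :=
  lineInvariant Q (adjLine p)

theorem wengerAdj_iff_truncate (hpow : ∀ a : F, a ^ (Q + 1) = a) (hQ : 0 < Q) (hQm : Q ≤ m)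
    {p l : Fin (m + 1) → F} :
    wengerAdj m p l ↔ wengerAdj Q (truncate hQm p) (truncate hQm l) ∧
      pointInvariant Q p = lineInvariant Q l := by
  refine ⟨fun h => ⟨h.truncate hQm, (wengerAdj_adjLine p).lineInvariant_eq hpow h⟩,
    fun ⟨ht, hc⟩ => ?_⟩
  set l₀ := adjLine p
  set t := l 0 - l₀ 0
  have hl₀ : wengerAdj m p l₀ := wengerAdj_adjLine p
  suffices l₀ + t • moment m (p 0) = l from this ▸ hl₀.add_smul_moment t
  refine eq_of_truncate_eq_of_lineInvariant_eq hQ hQm ?_ ?_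
  · rw [truncate_add_smul_moment, (hl₀.truncate hQm).eq_add_smul_moment ht]
    rfl
  · rw [lineInvariant_add_smul_moment hpow]
    exact hc

theorem eq_of_truncate_eq_of_pointInvariant_eq (hpow : ∀ a : F, a ^ (Q + 1) = a) (hQ : 0 < Q)
    (hQm : Q ≤ m) {p p' : Fin (m + 1) → F} (ht : truncate hQm p = truncate hQm p')
    (hc : pointInvariant Q p = pointInvariant Q p') : p = p' := by
  have h' : wengerAdj m p' (adjLine p) :=
    (wengerAdj_iff_truncate hpow hQ hQm).mpr
      ⟨ht ▸ (wengerAdj_adjLine p).truncate hQm, hc ▸ rfl⟩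
  exact (wengerAdj_adjLine p).left_unique h' (congrFun ht 0)

def truncVertex (hQm : Q ≤ m) :
    (Fin (m + 1) → F) ⊕ (Fin (m + 1) → F) → (Fin (Q + 1) → F) ⊕ (Fin (Q + 1) → F) :=
  Sum.map (truncate hQm) (truncate hQm)

def vertexInvariant (Q : ℕ) : (Fin (m + 1) → F) ⊕ (Fin (m + 1) → F) → Fin (m - Q) → F :=
  Sum.elim (pointInvariant Q) (lineInvariant Q)

theorem wenger_adj_iff_truncVertex (hpow : ∀ a : F, a ^ (Q + 1) = a) (hQ : 0 < Q) (hQm : Q ≤ m)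
    (x y : (Fin (m + 1) → F) ⊕ (Fin (m + 1) → F)) :
    (Wenger F m).Adj x y ↔ (Wenger F Q).Adj (truncVertex hQm x) (truncVertex hQm y) ∧
      vertexInvariant Q x = vertexInvariant Q y := by
  rcases x with p | l <;> rcases y with p' | l' <;>
    simp [truncVertex, vertexInvariant, wengerAdj_iff_truncate hpow hQ hQm, eq_comm]

def truncVertexEquiv [Fintype F] (hpow : ∀ a : F, a ^ (Q + 1) = a) (hQ : 0 < Q) (hQm : Q ≤ m) :
    (Fin (m + 1) → F) ⊕ (Fin (m + 1) → F) ≃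
      ((Fin (Q + 1) → F) ⊕ (Fin (Q + 1) → F)) × (Fin (m - Q) → F) :=
  Equiv.ofBijective (fun x => (truncVertex hQm x, vertexInvariant Q x)) <| by
    classical
    refine (Fintype.bijective_iff_injective_and_card _).mpr ⟨?_, ?_⟩
    · rintro (p | l) (p' | l') h <;> simp only [truncVertex, vertexInvariant, Prod.mk.injEq,
        Sum.map_inl, Sum.map_inr, Sum.elim_inl, Sum.elim_inr, Sum.inl.injEq, Sum.inr.injEq,
        reduceCtorEq, false_and] at h ⊢
      · exact eq_of_truncate_eq_of_pointInvariant_eq hpow hQ hQm h.1 h.2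
      · exact eq_of_truncate_eq_of_lineInvariant_eq hQ hQm h.1 h.2
    · simp only [Fintype.card_sum, Fintype.card_prod, Fintype.card_fun, Fintype.card_fin]
      rw [add_mul, ← pow_add, show Q + 1 + (m - Q) = m + 1 by omega]

end WengerGraph

end

theorem statement_7_general (F : Type) [Field F] [Fintype F] (m : ℕ) :
    (m ≤ Fintype.card F - 1 → (Wenger F m).Connected) ∧
    (Fintype.card F ≤ m →
      ¬ (Wenger F m).Connected ∧
      Nat.card (Wenger F m).ConnectedComponent
        = Fintype.card F ^ (m - Fintype.card F + 1) ∧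
      ∀ C : (Wenger F m).ConnectedComponent,
        Nonempty ((Wenger F m).induce C.supp ≃g Wenger F (Fintype.card F - 1))) := by
  have hq : 1 < Fintype.card F := Fintype.one_lt_card
  refine ⟨fun h => wenger_connected (by omega), fun h => ?_⟩
  have hpow (a : F) : a ^ (Fintype.card F - 1 + 1) = a := by
    rw [Nat.sub_add_cancel hq.le, FiniteField.pow_card]
  have hQ : 0 < Fintype.card F - 1 := by omega
  have hQm : Fintype.card F - 1 ≤ m := by omega
  have hH : (Wenger F (Fintype.card F - 1)).Connected := wenger_connected (by omega)
  let e := truncVertexEquiv hpow hQ hQm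
  have he := wenger_adj_iff_truncVertex hpow hQ hQm
  let components := componentEquivOfAdjIff e he hH
  refine ⟨fun hG => ?_, ?_, fun C => ⟨induceSuppIsoOfAdjIff e he hH C⟩⟩
  · have : Nonempty (Fin (m - (Fintype.card F - 1))) := ⟨⟨0, by omega⟩⟩
    have := hG.preconnected.subsingleton_connectedComponent
    exact not_subsingleton _ components.symm.subsingleton
  · rw [Nat.card_congr components, Nat.card_fun, Nat.card_eq_fintype_card, Nat.card_fin]
    congr 1
    omega

/-- For `1 ≤ m ≤ q - 1` the Wenger graph `W_m(q)` is connected; for `m ≥ q` it is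
disconnected, with exactly `q^{m-q+1}` components, each isomorphic to `W_{q-1}(q)`. -/
theorem statement_7 (F : Type) [Field F] [Fintype F] (m : ℕ) (hm : 1 ≤ m) :
    (m ≤ Fintype.card F - 1 → (Wenger F m).Connected) ∧
    (Fintype.card F ≤ m →
      ¬ (Wenger F m).Connected ∧
      Nat.card (Wenger F m).ConnectedComponent
        = Fintype.card F ^ (m - Fintype.card F + 1) ∧
      ∀ C : (Wenger F m).ConnectedComponent,
        Nonempty ((Wenger F m).induce C.supp ≃g Wenger F (Fintype.card F - 1))) :=
  statement_7_general F m
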